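/- The pair (H, ψ) is a right A-comodule algebra: (id_H ⊗ ε_A) ∘ ψ = id_H; (id_H ⊗ Δ_A) ∘ ψ = (ψ ⊗ id_A) ∘ ψ; ψ(h h') = ψ(h)·ψ(h') in the tensor-product algebra H ⊗ A for all h, h' ∈ H; and ψ(1_H) = 1_H ⊗ 1_A. -/
import Mathlib


open TensorProduct

noncomputable section

universe u

variable {k A H X : Type u} [Field k]
  [Ring A] [Ring H] [Ring X]
  [Bialgebra k A] [Bialgebra k H] [Bialgebra k X]

/-- ζ := (p_H ⊗ p_A) ∘ Δ_X ∘ ξ⁻¹ : A ⊗ H → H ⊗ A. -/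
def zetaC (pA : X →ₐc[k] A) (pH : X →ₐc[k] H) (ξ : X ≃ₗ[k] A ⊗[k] H) :
    A ⊗[k] H →ₗ[k] H ⊗[k] A :=
  TensorProduct.map (pH : X →ₗ[k] H) (pA : X →ₗ[k] A) ∘ₗ
    (Coalgebra.comul : X →ₗ[k] X ⊗[k] X) ∘ₗ ξ.symm.toLinearMap

/-- φ : A → H ⊗ A, φ(a) := ζ(a ⊗ 1_H). -/
def phiC (pA : X →ₐc[k] A) (pH : X →ₐc[k] H) (ξ : X ≃ₗ[k] A ⊗[k] H) :
    A →ₗ[k] H ⊗[k] A :=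
  zetaC pA pH ξ ∘ₗ (TensorProduct.mk k A H).flip (1 : H)

/-- ψ : H → H ⊗ A, ψ(h) := ζ(1_A ⊗ h). -/
def psiC (pA : X →ₐc[k] A) (pH : X →ₐc[k] H) (ξ : X ≃ₗ[k] A ⊗[k] H) :
    H →ₗ[k] H ⊗[k] A :=
  zetaC pA pH ξ ∘ₗ TensorProduct.mk k A H (1 : A)

section Aux

variable (pA : X →ₐc[k] A) (pH : X →ₐc[k] H) (ξ : X ≃ₗ[k] A ⊗[k] H)

lemma algMap_toLinearMap {B C D E : Type u} [Ring B] [Ring C] [Ring D] [Ring E]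
    [Algebra k B] [Algebra k C] [Algebra k D] [Algebra k E]
    (F : B →ₐ[k] D) (G : C →ₐ[k] E) :
    (Algebra.TensorProduct.map F G).toLinearMap
      = TensorProduct.map F.toLinearMap G.toLinearMap :=
  TensorProduct.ext' fun _ _ => rfl

lemma tp_map_mul {B C D E : Type u} [Ring B] [Ring C] [Ring D] [Ring E]
    [Algebra k B] [Algebra k C] [Algebra k D] [Algebra k E]
    (F : B →ₐ[k] D) (G : C →ₐ[k] E) (z w : B ⊗[k] C) :
    TensorProduct.map F.toLinearMap G.toLinearMap (z * w)
      = TensorProduct.map F.toLinearMap G.toLinearMap z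
        * TensorProduct.map F.toLinearMap G.toLinearMap w := by
  rw [← algMap_toLinearMap]
  exact map_mul (Algebra.TensorProduct.map F G) z w

lemma zetaC_apply (z : A ⊗[k] H) :
    zetaC pA pH ξ z
      = TensorProduct.map (pH : X →ₗ[k] H) (pA : X →ₗ[k] A)
          (Coalgebra.comul (ξ.symm z)) := rfl

variable (hξ : ∀ x : X, ξ x = TensorProduct.map (pA : X →ₗ[k] A) (pH : X →ₗ[k] H)
      (Coalgebra.comul x))

omit hξ in
lemma coe_lin_alg : ((pA : X →ₐ[k] A).toLinearMap = (pA : X →ₗ[k] A))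
    ∧ ((pH : X →ₐ[k] H).toLinearMap = (pH : X →ₗ[k] H)) := ⟨rfl, rfl⟩

include hξ

lemma xi_map_mul (x y : X) : ξ (x * y) = ξ x * ξ y := by
  rw [hξ, hξ, hξ, Bialgebra.comul_mul]
  exact tp_map_mul (pA : X →ₐ[k] A) (pH : X →ₐ[k] H) _ _

lemma xi_map_one : ξ (1 : X) = 1 := by
  rw [hξ, Bialgebra.comul_one, Algebra.TensorProduct.one_def, TensorProduct.map_tmul]
  show (pA (1:X)) ⊗ₜ[k] (pH (1:X)) = (1 : A ⊗[k] H)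
  rw [map_one, map_one, Algebra.TensorProduct.one_def]

lemma xi_symm_mul (z w : A ⊗[k] H) : ξ.symm (z * w) = ξ.symm z * ξ.symm w := by
  apply ξ.injective
  rw [ξ.apply_symm_apply, xi_map_mul pA pH ξ hξ, ξ.apply_symm_apply, ξ.apply_symm_apply]

lemma xi_symm_one : ξ.symm (1 : A ⊗[k] H) = 1 := by
  apply ξ.injective
  rw [ξ.apply_symm_apply, xi_map_one pA pH ξ hξ]

lemma zetaC_mul (z w : A ⊗[k] H) :
    zetaC pA pH ξ (z * w) = zetaC pA pH ξ z * zetaC pA pH ξ w := by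
  rw [zetaC_apply, zetaC_apply, zetaC_apply, xi_symm_mul pA pH ξ hξ, Bialgebra.comul_mul]
  exact tp_map_mul (pH : X →ₐ[k] H) (pA : X →ₐ[k] A) _ _

lemma zetaC_one : zetaC pA pH ξ (1 : A ⊗[k] H) = 1 := by
  rw [zetaC_apply, xi_symm_one pA pH ξ hξ, Bialgebra.comul_one,
    Algebra.TensorProduct.one_def, TensorProduct.map_tmul]
  show (pH (1:X)) ⊗ₜ[k] (pA (1:X)) = (1 : H ⊗[k] A)
  rw [map_one, map_one, Algebra.TensorProduct.one_def]

lemma pH_xi_symm (h : H) : pH (ξ.symm ((1:A) ⊗ₜ[k] h)) = h := by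
  set x := ξ.symm ((1:A) ⊗ₜ[k] h) with hx
  have h1 : TensorProduct.map (pA : X →ₗ[k] A) (pH : X →ₗ[k] H) (Coalgebra.comul x)
      = (1:A) ⊗ₜ[k] h := by rw [← hξ, hx, ξ.apply_symm_apply]
  have cc : (Coalgebra.counit ∘ₗ (pA : X →ₗ[k] A) : X →ₗ[k] k) = Coalgebra.counit :=
    CoalgHomClass.counit_comp pA
  have key : TensorProduct.map (Coalgebra.counit : A →ₗ[k] k) (LinearMap.id : H →ₗ[k] H)
      (TensorProduct.map (pA : X →ₗ[k] A) (pH : X →ₗ[k] H) (Coalgebra.comul x))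
      = (1:k) ⊗ₜ[k] pH x := by
    rw [← LinearMap.comp_apply, ← TensorProduct.map_comp, cc, LinearMap.id_comp,
      ← LinearMap.lTensor_comp_rTensor, LinearMap.comp_apply,
      Coalgebra.rTensor_counit_comul]
    rfl
  have h2 := congrArg (fun z => (TensorProduct.lid k H)
    (TensorProduct.map (Coalgebra.counit : A →ₗ[k] k) (LinearMap.id : H →ₗ[k] H) z)) h1
  simp only [key, TensorProduct.map_tmul, TensorProduct.lid_tmul, LinearMap.id_coe,
    id_eq, Bialgebra.counit_one, one_smul] at h2
  exact h2

lemma counit_psi (h : H) :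
    (TensorProduct.rid k H) (TensorProduct.map (LinearMap.id : H →ₗ[k] H)
      (Coalgebra.counit : A →ₗ[k] k) (psiC pA pH ξ h)) = h := by
  have hpsi : psiC pA pH ξ h
      = TensorProduct.map (pH : X →ₗ[k] H) (pA : X →ₗ[k] A)
          (Coalgebra.comul (ξ.symm ((1:A) ⊗ₜ[k] h))) := rfl
  set x := ξ.symm ((1:A) ⊗ₜ[k] h) with hx
  have cc : (Coalgebra.counit ∘ₗ (pA : X →ₗ[k] A) : X →ₗ[k] k) = Coalgebra.counit :=
    CoalgHomClass.counit_comp pA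
  have key : TensorProduct.map (LinearMap.id : H →ₗ[k] H) (Coalgebra.counit : A →ₗ[k] k)
      (TensorProduct.map (pH : X →ₗ[k] H) (pA : X →ₗ[k] A) (Coalgebra.comul x))
      = pH x ⊗ₜ[k] (1:k) := by
    rw [← LinearMap.comp_apply, ← TensorProduct.map_comp, cc, LinearMap.id_comp,
      ← LinearMap.rTensor_comp_lTensor, LinearMap.comp_apply,
      Coalgebra.lTensor_counit_comul]
    rfl
  rw [hpsi, key, TensorProduct.rid_tmul, one_smul]
  exact pH_xi_symm pA pH ξ hξ h

omit hξ in
lemma tmap_tmap {M₁ N₁ M₂ N₂ M₃ N₃ : Type u}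
    [AddCommGroup M₁] [AddCommGroup N₁] [AddCommGroup M₂] [AddCommGroup N₂]
    [AddCommGroup M₃] [AddCommGroup N₃]
    [Module k M₁] [Module k N₁] [Module k M₂] [Module k N₂] [Module k M₃] [Module k N₃]
    (f₂ : M₂ →ₗ[k] M₃) (f₁ : M₁ →ₗ[k] M₂) (g₂ : N₂ →ₗ[k] N₃) (g₁ : N₁ →ₗ[k] N₂)
    (w : M₁ ⊗[k] N₁) :
    TensorProduct.map f₂ g₂ (TensorProduct.map f₁ g₁ w)
      = TensorProduct.map (f₂ ∘ₗ f₁) (g₂ ∘ₗ g₁) w := by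
  rw [← LinearMap.comp_apply, ← TensorProduct.map_comp]

lemma zeta_xi_apply (y : X) :
    zetaC pA pH ξ (TensorProduct.map (pA : X →ₗ[k] A) (pH : X →ₗ[k] H) (Coalgebra.comul y))
      = TensorProduct.map (pH : X →ₗ[k] H) (pA : X →ₗ[k] A) (Coalgebra.comul y) := by
  rw [← hξ, zetaC_apply, ξ.symm_apply_apply]

omit hξ in
lemma coa_apply' (x : X) :
    (TensorProduct.assoc k X X X)
        (TensorProduct.map (Coalgebra.comul : X →ₗ[k] X ⊗[k] X) LinearMap.id
          (Coalgebra.comul x))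
      = TensorProduct.map LinearMap.id (Coalgebra.comul : X →ₗ[k] X ⊗[k] X)
          (Coalgebra.comul x) :=
  Coalgebra.coassoc_apply x

lemma hexagon (z : A ⊗[k] H) :
    TensorProduct.map LinearMap.id (Coalgebra.comul : A →ₗ[k] A ⊗[k] A) (zetaC pA pH ξ z)
      = (TensorProduct.assoc k H A A)
          (TensorProduct.map (zetaC pA pH ξ) LinearMap.id
            ((TensorProduct.assoc k A H A).symm
              (TensorProduct.map LinearMap.id (zetaC pA pH ξ)
                ((TensorProduct.assoc k A A H)
                  (TensorProduct.map (Coalgebra.comul : A →ₗ[k] A ⊗[k] A) LinearMap.id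
                    z))))) := by
  obtain ⟨x, rfl⟩ : ∃ x : X,
      TensorProduct.map (pA : X →ₗ[k] A) (pH : X →ₗ[k] H) (Coalgebra.comul x) = z :=
    ⟨ξ.symm z, by rw [← hξ, ξ.apply_symm_apply]⟩
  have mcA : TensorProduct.map (pA : X →ₗ[k] A) (pA : X →ₗ[k] A)
        ∘ₗ (Coalgebra.comul : X →ₗ[k] X ⊗[k] X)
      = (Coalgebra.comul : A →ₗ[k] A ⊗[k] A) ∘ₗ (pA : X →ₗ[k] A) :=
    CoalgHomClass.map_comp_comul pA
  have inner : (zetaC pA pH ξ ∘ₗ TensorProduct.map (pA : X →ₗ[k] A) (pH : X →ₗ[k] H))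
        ∘ₗ (Coalgebra.comul : X →ₗ[k] X ⊗[k] X)
      = TensorProduct.map (pH : X →ₗ[k] H) (pA : X →ₗ[k] A)
        ∘ₗ (Coalgebra.comul : X →ₗ[k] X ⊗[k] X) := by
    ext y
    simp only [LinearMap.comp_apply]
    exact zeta_xi_apply pA pH ξ hξ y
  -- Left-hand side
  have lhs_eq : TensorProduct.map LinearMap.id (Coalgebra.comul : A →ₗ[k] A ⊗[k] A)
        (zetaC pA pH ξ (TensorProduct.map (pA : X →ₗ[k] A) (pH : X →ₗ[k] H)
          (Coalgebra.comul x)))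
      = TensorProduct.map (pH : X →ₗ[k] H)
          (TensorProduct.map (pA : X →ₗ[k] A) (pA : X →ₗ[k] A))
          ((TensorProduct.assoc k X X X)
            (TensorProduct.map (Coalgebra.comul : X →ₗ[k] X ⊗[k] X) LinearMap.id
              (Coalgebra.comul x))) := by
    rw [zeta_xi_apply pA pH ξ hξ, coa_apply', tmap_tmap, tmap_tmap, LinearMap.id_comp,
      LinearMap.comp_id, ← mcA]
  -- Right-hand side, step by step
  have s1 : TensorProduct.map (Coalgebra.comul : A →ₗ[k] A ⊗[k] A) LinearMap.id
        (TensorProduct.map (pA : X →ₗ[k] A) (pH : X →ₗ[k] H) (Coalgebra.comul x))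
      = TensorProduct.map (TensorProduct.map (pA : X →ₗ[k] A) (pA : X →ₗ[k] A))
          (pH : X →ₗ[k] H)
          (TensorProduct.map (Coalgebra.comul : X →ₗ[k] X ⊗[k] X) LinearMap.id
            (Coalgebra.comul x)) := by
    rw [tmap_tmap, tmap_tmap, LinearMap.id_comp, LinearMap.comp_id, ← mcA]
  have s2 : (TensorProduct.assoc k A A H)
        (TensorProduct.map (TensorProduct.map (pA : X →ₗ[k] A) (pA : X →ₗ[k] A))
          (pH : X →ₗ[k] H)
          (TensorProduct.map (Coalgebra.comul : X →ₗ[k] X ⊗[k] X) LinearMap.id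
            (Coalgebra.comul x)))
      = TensorProduct.map (pA : X →ₗ[k] A)
          (TensorProduct.map (pA : X →ₗ[k] A) (pH : X →ₗ[k] H))
          (TensorProduct.map LinearMap.id (Coalgebra.comul : X →ₗ[k] X ⊗[k] X)
            (Coalgebra.comul x)) := by
    rw [← TensorProduct.map_map_assoc, coa_apply']
  have s3 : TensorProduct.map LinearMap.id (zetaC pA pH ξ)
        (TensorProduct.map (pA : X →ₗ[k] A)
          (TensorProduct.map (pA : X →ₗ[k] A) (pH : X →ₗ[k] H))
          (TensorProduct.map LinearMap.id (Coalgebra.comul : X →ₗ[k] X ⊗[k] X)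
            (Coalgebra.comul x)))
      = TensorProduct.map (pA : X →ₗ[k] A)
          (TensorProduct.map (pH : X →ₗ[k] H) (pA : X →ₗ[k] A))
          (TensorProduct.map LinearMap.id (Coalgebra.comul : X →ₗ[k] X ⊗[k] X)
            (Coalgebra.comul x)) := by
    rw [tmap_tmap, tmap_tmap, tmap_tmap, LinearMap.id_comp, LinearMap.comp_id, inner]
  have s4 : (TensorProduct.assoc k A H A).symm
        (TensorProduct.map (pA : X →ₗ[k] A)
          (TensorProduct.map (pH : X →ₗ[k] H) (pA : X →ₗ[k] A))
          (TensorProduct.map LinearMap.id (Coalgebra.comul : X →ₗ[k] X ⊗[k] X)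
            (Coalgebra.comul x)))
      = TensorProduct.map
          (TensorProduct.map (pA : X →ₗ[k] A) (pH : X →ₗ[k] H)) (pA : X →ₗ[k] A)
          (TensorProduct.map (Coalgebra.comul : X →ₗ[k] X ⊗[k] X) LinearMap.id
            (Coalgebra.comul x)) := by
    rw [← coa_apply', ← TensorProduct.map_map_assoc_symm, LinearEquiv.symm_apply_apply]
  have s5 : TensorProduct.map (zetaC pA pH ξ) LinearMap.id
        (TensorProduct.map
          (TensorProduct.map (pA : X →ₗ[k] A) (pH : X →ₗ[k] H)) (pA : X →ₗ[k] A)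
          (TensorProduct.map (Coalgebra.comul : X →ₗ[k] X ⊗[k] X) LinearMap.id
            (Coalgebra.comul x)))
      = TensorProduct.map
          (TensorProduct.map (pH : X →ₗ[k] H) (pA : X →ₗ[k] A)) (pA : X →ₗ[k] A)
          (TensorProduct.map (Coalgebra.comul : X →ₗ[k] X ⊗[k] X) LinearMap.id
            (Coalgebra.comul x)) := by
    rw [tmap_tmap, tmap_tmap, tmap_tmap, LinearMap.id_comp, LinearMap.comp_id, inner]
  have s6 : (TensorProduct.assoc k H A A)
        (TensorProduct.map
          (TensorProduct.map (pH : X →ₗ[k] H) (pA : X →ₗ[k] A)) (pA : X →ₗ[k] A)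
          (TensorProduct.map (Coalgebra.comul : X →ₗ[k] X ⊗[k] X) LinearMap.id
            (Coalgebra.comul x)))
      = TensorProduct.map (pH : X →ₗ[k] H)
          (TensorProduct.map (pA : X →ₗ[k] A) (pA : X →ₗ[k] A))
          ((TensorProduct.assoc k X X X)
            (TensorProduct.map (Coalgebra.comul : X →ₗ[k] X ⊗[k] X) LinearMap.id
              (Coalgebra.comul x))) := by
    rw [← TensorProduct.map_map_assoc]
  rw [lhs_eq, s1, s2, s3, s4, s5, s6]

omit hξ in
lemma psi_w (w : H ⊗[k] A) :
    TensorProduct.map (zetaC pA pH ξ) LinearMap.id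
        ((TensorProduct.assoc k A H A).symm ((1:A) ⊗ₜ[k] w))
      = TensorProduct.map (psiC pA pH ξ) LinearMap.id w := by
  induction w using TensorProduct.induction_on with
  | zero =>
      rw [TensorProduct.tmul_zero, LinearEquiv.map_zero, map_zero, map_zero]
  | tmul h a =>
      rw [TensorProduct.assoc_symm_tmul, TensorProduct.map_tmul, TensorProduct.map_tmul]
      rfl
  | add u v hu hv =>
      rw [TensorProduct.tmul_add, map_add, map_add, hu, hv, map_add]

end Aux

/-- (H, ψ) is a right A-comodule algebra. -/
theorem psi_comodule_algebra (pA : X →ₐc[k] A) (pH : X →ₐc[k] H)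
    (ξ : X ≃ₗ[k] A ⊗[k] H)
    (hξ : ∀ x : X, ξ x = TensorProduct.map (pA : X →ₗ[k] A) (pH : X →ₗ[k] H)
      (Coalgebra.comul x)) :
    (TensorProduct.rid k H).toLinearMap ∘ₗ
        TensorProduct.map LinearMap.id (Coalgebra.counit : A →ₗ[k] k) ∘ₗ
        psiC pA pH ξ
      = LinearMap.id ∧
    TensorProduct.map LinearMap.id (Coalgebra.comul : A →ₗ[k] A ⊗[k] A) ∘ₗ
        psiC pA pH ξ
      = (TensorProduct.assoc k H A A).toLinearMap ∘ₗ
        TensorProduct.map (psiC pA pH ξ) LinearMap.id ∘ₗ psiC pA pH ξ ∧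
    (∀ h h' : H, psiC pA pH ξ (h * h') = psiC pA pH ξ h * psiC pA pH ξ h') ∧
    psiC pA pH ξ (1 : H) = (1 : H) ⊗ₜ[k] (1 : A) := by
  refine ⟨?_, ?_, ?_, ?_⟩
  · apply LinearMap.ext
    intro h
    simp only [LinearMap.comp_apply, LinearEquiv.coe_coe, LinearMap.id_apply]
    exact counit_psi pA pH ξ hξ h
  · apply LinearMap.ext
    intro h
    simp only [LinearMap.comp_apply, LinearEquiv.coe_coe]
    have hz := hexagon pA pH ξ hξ ((1:A) ⊗ₜ[k] h)
    rw [TensorProduct.map_tmul, LinearMap.id_apply, Bialgebra.comul_one,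
      Algebra.TensorProduct.one_def, TensorProduct.assoc_tmul, TensorProduct.map_tmul,
      LinearMap.id_apply, psi_w] at hz
    have h1 : zetaC pA pH ξ ((1:A) ⊗ₜ[k] h) = psiC pA pH ξ h := rfl
    rw [h1] at hz
    exact hz
  · intro h h'
    have h1 : psiC pA pH ξ (h * h') = zetaC pA pH ξ ((1:A) ⊗ₜ[k] (h * h')) := rfl
    have h2 : ((1:A) ⊗ₜ[k] (h * h') : A ⊗[k] H)
        = ((1:A) ⊗ₜ[k] h) * ((1:A) ⊗ₜ[k] h') := by
      rw [Algebra.TensorProduct.tmul_mul_tmul, one_mul]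
    rw [h1, h2, zetaC_mul pA pH ξ hξ]
    rfl
  · have h1 : psiC pA pH ξ (1 : H) = zetaC pA pH ξ ((1:A) ⊗ₜ[k] (1:H)) := rfl
    rw [h1, ← Algebra.TensorProduct.one_def, zetaC_one pA pH ξ hξ,
      Algebra.TensorProduct.one_def]
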